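/- For every s = diag(t₁,…,tₙ,t₁,…,tₙ) ∈ 𝔱, the centralizer 𝔷(s) = {x ∈ 𝔰𝔭_{2n}(k) : s·x = x·s} has k-dimension at least 3n, with equality if and only if t₁,…,tₙ are pairwise distinct. In particular, no element of 𝔱 has centralizer in 𝔰𝔭_{2n}(k) of dimension n, so 𝔰𝔭_{2n}(k) contains no regular semisimple elements. -/

import Mathlib

open Matrix

/-- The Gram matrix `J = [[0, 1ₙ], [1ₙ, 0]]` of the symplectic form. -/
def Jsp (k : Type*) [Field k] (n : ℕ) : Matrix (Fin n ⊕ Fin n) (Fin n ⊕ Fin n) k :=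
  Matrix.fromBlocks 0 1 1 0

/-- The element `diag(t₁,…,tₙ,t₁,…,tₙ)` of `𝔱`. -/
def tDiag (k : Type*) [Field k] (n : ℕ) (t : Fin n → k) :
    Matrix (Fin n ⊕ Fin n) (Fin n ⊕ Fin n) k :=
  Matrix.fromBlocks (Matrix.diagonal t) 0 0 (Matrix.diagonal t)

/-- The centralizer `𝔷(s) = {x ∈ 𝔰𝔭_{2n}(k) : s·x = x·s}` as a `k`-subspace of `M_{2n}(k)`. -/
def spCent (k : Type*) [Field k] (n : ℕ) (s : Matrix (Fin n ⊕ Fin n) (Fin n ⊕ Fin n) k) :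
    Submodule k (Matrix (Fin n ⊕ Fin n) (Fin n ⊕ Fin n) k) where
  carrier := {x | xᵀ * Jsp k n = Jsp k n * x ∧ s * x = x * s}
  add_mem' := by
    rintro a b ⟨ha1, ha2⟩ ⟨hb1, hb2⟩
    constructor
    · rw [Matrix.transpose_add, Matrix.add_mul, Matrix.mul_add, ha1, hb1]
    · rw [Matrix.mul_add, Matrix.add_mul, ha2, hb2]
  zero_mem' := by
    constructor
    · rw [Matrix.transpose_zero, Matrix.zero_mul, Matrix.mul_zero]
    · rw [Matrix.mul_zero, Matrix.zero_mul]
  smul_mem' := by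
    rintro c a ⟨ha1, ha2⟩
    constructor
    · rw [Matrix.transpose_smul, Matrix.smul_mul, Matrix.mul_smul, ha1]
    · rw [Matrix.mul_smul, Matrix.smul_mul, ha2]

/-!
Left multiplication by `J` identifies `𝔰𝔭_{2n}` with the symmetric matrices, and the centralizer
of `s = diag(t, t)` with the symmetric matrices supported on `{(a, b) | e a = e b}`, where
`e = (t, t)`. Symmetric matrices supported on a symmetric relation `r` are functions on the
unordered `r`-related pairs, so their dimension is `(#r + #(r ∩ diagonal)) / 2`; for `s` this is
`2 · #{(i, j) | tᵢ = tⱼ} + n ≥ 3n`, with equality iff the `tᵢ` are distinct.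

For an arbitrary `x ∈ 𝔰𝔭_{2n}` and characteristic `2`, `J [x, y] = A - Aᵀ` with `A = J x y` is
alternating whenever `y ∈ 𝔰𝔭_{2n}`. So `y ↦ J [x, y]` maps `𝔰𝔭_{2n}` into a space of dimension
`n (2n - 1)` with kernel `𝔷(x)`, and `dim 𝔷(x) ≥ (2n² + n) - (2n² - n) = 2n > n`.
-/

namespace Sym2

variable {ι : Type*} {r : ι → ι → Prop}

theorem two_mul_card_fromRel [Fintype ι] [DecidableEq ι] [DecidableRel r] (hr : Std.Symm r) :
    2 * Fintype.card (fromRel hr) =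
      Fintype.card {p : ι × ι // r p.1 p.2} + Fintype.card {a // r a a} := by
  let φ : {p : ι × ι // r p.1 p.2} ⊕ {a // r a a} → fromRel hr :=
    Sum.elim (fun p => ⟨s(p.1.1, p.1.2), p.2⟩) (fun a => ⟨s(a.1, a.1), a.2⟩)
  have hfiber : ∀ z, (Finset.univ.filter fun w => φ w = z).card = 2 := by
    rintro ⟨z, hz⟩
    induction z using Sym2.ind with | _ a b => ?_
    rw [Finset.card_eq_two]
    by_cases hab : a = b
    · subst hab
      refine ⟨.inl ⟨(a, a), hz⟩, .inr ⟨a, hz⟩, Sum.inl_ne_inr, ?_⟩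
      ext (⟨⟨c, d⟩, h⟩ | ⟨c, h⟩) <;> simp [φ, Subtype.ext_iff, Prod.ext_iff]
    · refine ⟨.inl ⟨(a, b), hz⟩, .inl ⟨(b, a), hr.symm _ _ hz⟩,
        by simp [Subtype.ext_iff, hab], ?_⟩
      ext (⟨⟨c, d⟩, h⟩ | ⟨c, h⟩) <;> simp [φ, Subtype.ext_iff, Prod.ext_iff]
      grind
  rw [← Fintype.card_sum, ← Finset.card_univ (α := _ ⊕ _),
    Finset.card_eq_sum_card_fiberwise (f := φ) fun _ _ => Finset.mem_univ _]
  simp [hfiber, mul_comm]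

end Sym2

namespace Fintype

variable {ι κ : Type*} [Fintype ι]

theorem card_pairs_ne [DecidableEq ι] :
    card {p : ι × ι // p.1 ≠ p.2} = card ι * card ι - card ι := by
  rw [card_subtype, ← Finset.card_univ, ← Finset.offDiag_card]
  congr 1
  ext
  simp

variable [DecidableEq κ] (f : ι → κ)

theorem card_le_card_pairs_apply_eq : card ι ≤ card {p : ι × ι // f p.1 = f p.2} :=
  card_le_of_injective (fun a => ⟨(a, a), rfl⟩) fun _ _ h => congr_arg (·.1.1) h

theorem card_pairs_apply_eq_eq_card_iff :
    card {p : ι × ι // f p.1 = f p.2} = card ι ↔ Function.Injective f := by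
  let diag : ι → {p : ι × ι // f p.1 = f p.2} := fun a => ⟨(a, a), rfl⟩
  have hdiag : Function.Injective diag := fun _ _ h => congr_arg (·.1.1) h
  calc _ ↔ Function.Bijective diag := by
        rw [bijective_iff_injective_and_card, and_iff_right hdiag, eq_comm]
    _ ↔ Function.Surjective diag := and_iff_right hdiag
    _ ↔ Function.Injective f := by
      refine ⟨fun hsurj a b hab => ?_,
        fun hf ⟨⟨a, b⟩, hab⟩ => ⟨a, Subtype.ext (Prod.ext rfl (hf hab))⟩⟩
      obtain ⟨c, hc⟩ := hsurj ⟨(a, b), hab⟩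
      simp only [diag, Subtype.mk.injEq, Prod.mk.injEq] at hc
      exact hc.1.symm.trans hc.2

theorem card_pairs_sumElim_apply_eq :
    card {p : (ι ⊕ ι) × (ι ⊕ ι) // Sum.elim f f p.1 = Sum.elim f f p.2} =
      4 * card {p : ι × ι // f p.1 = f p.2} := by
  simp only [card_subtype, Finset.card_filter, sum_prod_type, sum_sum_type, Sum.elim_inl,
    Sum.elim_inr, Finset.sum_add_distrib]
  -- the four summands agree only up to their `Decidable` instances, which `ring` does not unfold
  exact (fun B => by ring : ∀ B : ℕ, B + B + (B + B) = 4 * B) _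

end Fintype

theorem Submodule.finrank_inf_ker_add_finrank_map {K V W : Type*} [Field K] [AddCommGroup V]
    [Module K V] [AddCommGroup W] [Module K W] [FiniteDimensional K V] (f : V →ₗ[K] W)
    (p : Submodule K V) :
    Module.finrank K ↥(p ⊓ LinearMap.ker f) + Module.finrank K (p.map f) =
      Module.finrank K p := by
  have h := (f.domRestrict p).finrank_range_add_finrank_ker
  rwa [LinearMap.range_domRestrict, LinearMap.ker_domRestrict, ← finrank_map_subtype_eq,
    map_comap_subtype, add_comm] at h

namespace Matrix

variable {ι R K : Type*} {r : ι → ι → Prop}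

def symmetricOn (R : Type*) [Semiring R] (r : ι → ι → Prop) : Submodule R (Matrix ι ι R) where
  carrier := {S | Sᵀ = S ∧ ∀ a b, ¬ r a b → S a b = 0}
  add_mem' := by
    rintro S T ⟨hS, hS₀⟩ ⟨hT, hT₀⟩
    exact ⟨by rw [transpose_add, hS, hT], fun a b h => by simp [hS₀ a b h, hT₀ a b h]⟩
  zero_mem' := ⟨transpose_zero, fun _ _ _ => rfl⟩
  smul_mem' := by
    rintro c S ⟨hS, hS₀⟩
    exact ⟨by rw [transpose_smul, hS], fun a b h => by simp [hS₀ a b h]⟩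

theorem mem_symmetricOn [Semiring R] {S : Matrix ι ι R} :
    S ∈ symmetricOn R r ↔ Sᵀ = S ∧ ∀ a b, ¬ r a b → S a b = 0 := Iff.rfl

def symmetricOnEquiv [Semiring R] [DecidableRel r] (hr : Std.Symm r) :
    symmetricOn R r ≃ₗ[R] (Sym2.fromRel hr → R) where
  toFun S z := Sym2.lift ⟨fun a b => S.1 a b, fun a b => congr_fun (congr_fun S.2.1 b) a⟩ z.1
  map_add' S T := by
    funext z
    induction z using Subtype.rec with | _ z _ => induction z using Sym2.ind; rfl
  map_smul' c S := by
    funext z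
    induction z using Subtype.rec with | _ z _ => induction z using Sym2.ind; rfl
  invFun w := ⟨of fun a b => if h : r a b then w ⟨s(a, b), h⟩ else 0, by
    refine ⟨?_, fun a b h => dif_neg h⟩
    ext a b
    by_cases h : r a b
    · simp [h, hr.symm _ _ h, Sym2.eq_swap]
    · simp [h, mt (hr.symm b a) h]⟩
  left_inv S := by
    ext a b
    by_cases h : r a b
    · simp [h]
    · simp [h, S.2.2 a b h]
  right_inv w := by
    funext z
    induction z using Subtype.rec with
    | _ z hz => induction z using Sym2.ind; simp [Sym2.fromRel_prop.1 hz]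

section Finrank

variable [Field K] [Fintype ι] [DecidableEq ι]

theorem two_mul_finrank_symmetricOn [DecidableRel r] (hr : Std.Symm r) :
    2 * Module.finrank K (symmetricOn K r) =
      Fintype.card {p : ι × ι // r p.1 p.2} + Fintype.card {a // r a a} := by
  rw [(symmetricOnEquiv hr).finrank_eq, Module.finrank_fintype_fun_eq_card,
    Sym2.two_mul_card_fromRel]

theorem two_mul_finrank_symmetricOn_ne :
    2 * Module.finrank K (symmetricOn K (ι := ι) (· ≠ ·)) =
      Fintype.card ι * Fintype.card ι - Fintype.card ι := by
  rw [two_mul_finrank_symmetricOn ⟨fun _ _ => Ne.symm⟩, Fintype.card_pairs_ne]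
  simp

end Finrank

theorem diagonal_mul_eq_mul_diagonal_iff [Fintype ι] [DecidableEq ι] [CommRing R]
    [NoZeroDivisors R] {d : ι → R} {x : Matrix ι ι R} :
    diagonal d * x = x * diagonal d ↔ ∀ a b, d a ≠ d b → x a b = 0 := by
  simp only [← ext_iff, diagonal_mul, mul_diagonal]
  refine forall₂_congr fun a b => ?_
  rw [mul_comm, ← sub_eq_zero, ← mul_sub, mul_eq_zero, sub_eq_zero, or_comm, or_iff_not_imp_left]

theorem sub_transpose_mem_symmetricOn_ne [Ring R] [CharP R 2] (A : Matrix ι ι R) :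
    A - Aᵀ ∈ symmetricOn R (· ≠ ·) :=
  ⟨by ext a b; simp only [transpose_apply, sub_apply, CharTwo.sub_eq_add, add_comm],
    fun a b h => by rw [not_not.mp h, sub_apply, transpose_apply, sub_self]⟩

end Matrix

section Symplectic

variable {k : Type*} [Field k] {n : ℕ}

theorem Jsp_transpose : (Jsp k n)ᵀ = Jsp k n := by
  simp [Jsp, fromBlocks_transpose]

theorem Jsp_mul_Jsp : Jsp k n * Jsp k n = 1 := by
  simp [Jsp, fromBlocks_multiply, ← fromBlocks_one]

theorem Jsp_mul_apply (x : Matrix (Fin n ⊕ Fin n) (Fin n ⊕ Fin n) k) (a b : Fin n ⊕ Fin n) :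
    (Jsp k n * x) a b = x a.swap b := by
  cases a <;> simp [Jsp, mul_apply, fromBlocks, Fintype.sum_sum_type, one_apply]

theorem transpose_Jsp_mul (x : Matrix (Fin n ⊕ Fin n) (Fin n ⊕ Fin n) k) :
    (Jsp k n * x)ᵀ = xᵀ * Jsp k n := by
  rw [transpose_mul, Jsp_transpose]

theorem transpose_Jsp_mul_mul {x y : Matrix (Fin n ⊕ Fin n) (Fin n ⊕ Fin n) k}
    (hx : xᵀ * Jsp k n = Jsp k n * x) (hy : yᵀ * Jsp k n = Jsp k n * y) :
    (Jsp k n * (x * y))ᵀ = Jsp k n * (y * x) := by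
  rw [transpose_Jsp_mul, transpose_mul, mul_assoc, hx, ← mul_assoc, hy, mul_assoc]

theorem tDiag_eq_diagonal (t : Fin n → k) : tDiag k n t = diagonal (Sum.elim t t) := by
  rw [tDiag, fromBlocks_diagonal]

theorem tDiag_zero : tDiag k n 0 = 0 := by
  simp [tDiag]

theorem mem_spCent_tDiag_iff {t : Fin n → k} {x : Matrix (Fin n ⊕ Fin n) (Fin n ⊕ Fin n) k} :
    x ∈ spCent k n (tDiag k n t) ↔
      Jsp k n * x ∈ symmetricOn k (fun a b => Sum.elim t t a = Sum.elim t t b) := by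
  have elim_swap (a : Fin n ⊕ Fin n) : Sum.elim t t a.swap = Sum.elim t t a := by cases a <;> rfl
  change xᵀ * Jsp k n = Jsp k n * x ∧ _ ↔ _
  rw [mem_symmetricOn, transpose_Jsp_mul, eq_comm (b := Jsp k n * x), tDiag_eq_diagonal,
    diagonal_mul_eq_mul_diagonal_iff]
  refine and_congr_right' ⟨fun h a b hab => ?_, fun h a b hab => ?_⟩
  · rw [Jsp_mul_apply]
    exact h _ _ (by rwa [elim_swap])
  · simpa [Jsp_mul_apply] using h a.swap b (by rwa [elim_swap])

theorem finrank_spCent_tDiag [DecidableEq k] (t : Fin n → k) :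
    Module.finrank k (spCent k n (tDiag k n t)) =
      2 * Fintype.card {p : Fin n × Fin n // t p.1 = t p.2} + n := by
  let J : Matrix (Fin n ⊕ Fin n) (Fin n ⊕ Fin n) k ≃ₗ[k] _ :=
    .ofInvolutive (LinearMap.mulLeft k (Jsp k n)) fun x => by simp [← mul_assoc, Jsp_mul_Jsp]
  have hJ (y) : J.symm y = Jsp k n * y := J.symm_apply_eq.mpr <| by
    change y = Jsp k n * (Jsp k n * y)
    rw [← mul_assoc, Jsp_mul_Jsp, one_mul]
  have hmap : (spCent k n (tDiag k n t)).map J.toLinearMap =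
      symmetricOn k (fun a b => Sum.elim t t a = Sum.elim t t b) := by
    ext y
    simp [Submodule.mem_map_equiv, hJ, mem_spCent_tDiag_iff, ← mul_assoc, Jsp_mul_Jsp]
  have h := two_mul_finrank_symmetricOn (K := k)
    (r := fun a b => Sum.elim t t a = Sum.elim t t b) ⟨fun _ _ => Eq.symm⟩
  rw [← hmap, J.finrank_map_eq, Fintype.card_pairs_sumElim_apply_eq] at h
  simp only [Fintype.card_subtype_true, Fintype.card_sum, Fintype.card_fin] at h
  omega

theorem finrank_spCent_zero : Module.finrank k (spCent k n 0) = 2 * (n * n) + n := by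
  classical
  rw [← tDiag_zero, finrank_spCent_tDiag]
  simp

theorem two_mul_le_finrank_spCent [CharP k 2] {x : Matrix (Fin n ⊕ Fin n) (Fin n ⊕ Fin n) k}
    (hx : xᵀ * Jsp k n = Jsp k n * x) :
    2 * n ≤ Module.finrank k (spCent k n x) := by
  let L : Matrix (Fin n ⊕ Fin n) (Fin n ⊕ Fin n) k →ₗ[k] Matrix (Fin n ⊕ Fin n) (Fin n ⊕ Fin n) k :=
    LinearMap.mulLeft k (Jsp k n) ∘ₗ (LinearMap.mulLeft k x - LinearMap.mulRight k x)
  have hker : spCent k n 0 ⊓ LinearMap.ker L = spCent k n x := by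
    ext y
    change (yᵀ * Jsp k n = Jsp k n * y ∧ 0 * y = y * 0) ∧ Jsp k n * (x * y - y * x) = 0 ↔
      yᵀ * Jsp k n = Jsp k n * y ∧ x * y = y * x
    have hJ : IsUnit (Jsp k n) := ⟨⟨_, _, Jsp_mul_Jsp, Jsp_mul_Jsp⟩, rfl⟩
    rw [zero_mul, mul_zero, and_iff_left rfl, hJ.mul_right_eq_zero, sub_eq_zero]
  have hmap : (spCent k n 0).map L ≤ symmetricOn k (· ≠ ·) := by
    rintro _ ⟨y, ⟨hy, -⟩, rfl⟩
    change Jsp k n * (x * y - y * x) ∈ _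
    rw [mul_sub, ← transpose_Jsp_mul_mul hx hy]
    exact sub_transpose_mem_symmetricOn_ne _
  have hrank := Submodule.finrank_inf_ker_add_finrank_map L (spCent k n 0)
  rw [hker, finrank_spCent_zero] at hrank
  have halt := two_mul_finrank_symmetricOn_ne (K := k) (ι := Fin n ⊕ Fin n)
  rw [Fintype.card_sum, Fintype.card_fin] at halt
  have := Submodule.finrank_mono hmap
  have : (n + n) * (n + n) = 4 * (n * n) := by ring
  have := Nat.le_mul_self n
  omega

end Symplectic

theorem stmt_12_general (k : Type) [Field k] [CharP k 2] (n : ℕ) (hn : 1 ≤ n) :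
    (∀ t : Fin n → k,
      3 * n ≤ Module.finrank k (spCent k n (tDiag k n t)) ∧
      (Module.finrank k (spCent k n (tDiag k n t)) = 3 * n ↔ Function.Injective t)) ∧
    (∀ t : Fin n → k, Module.finrank k (spCent k n (tDiag k n t)) ≠ n) ∧
    ¬ ∃ x : Matrix (Fin n ⊕ Fin n) (Fin n ⊕ Fin n) k,
      xᵀ * Jsp k n = Jsp k n * x ∧
      (∃ u : Matrix (Fin n ⊕ Fin n) (Fin n ⊕ Fin n) k, IsUnit u ∧
        ∃ d : Fin n ⊕ Fin n → k, u * x * u⁻¹ = Matrix.diagonal d) ∧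
      Module.finrank k (spCent k n x) = n := by
  classical
  have key (t : Fin n → k) : 3 * n ≤ Module.finrank k (spCent k n (tDiag k n t)) ∧
      (Module.finrank k (spCent k n (tDiag k n t)) = 3 * n ↔ Function.Injective t) := by
    have hle := Fintype.card_le_card_pairs_apply_eq t
    rw [finrank_spCent_tDiag, ← Fintype.card_pairs_apply_eq_eq_card_iff]
    rw [Fintype.card_fin] at hle ⊢
    omega
  refine ⟨key, fun t h => ?_, ?_⟩
  · have := (key t).1
    omega
  · rintro ⟨x, hx, -, hdim⟩
    have := two_mul_le_finrank_spCent hx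
    omega

/-- For `s = diag(t₁,…,tₙ,t₁,…,tₙ) ∈ 𝔱`, the centralizer of `s` in
`𝔰𝔭_{2n}(k)` has dimension at least `3n`, with equality iff the `tᵢ` are pairwise distinct.
In particular no element of `𝔱` has centralizer of dimension `n`, so `𝔰𝔭_{2n}(k)` contains
no regular semisimple element (diagonalizable, with centralizer of dimension `n`). -/
theorem stmt_12 (k : Type) [Field k] [IsAlgClosed k] [CharP k 2] (n : ℕ) (hn : 1 ≤ n) :
    (∀ t : Fin n → k,
      3 * n ≤ Module.finrank k (spCent k n (tDiag k n t)) ∧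
      (Module.finrank k (spCent k n (tDiag k n t)) = 3 * n ↔ Function.Injective t)) ∧
    (∀ t : Fin n → k, Module.finrank k (spCent k n (tDiag k n t)) ≠ n) ∧
    ¬ ∃ x : Matrix (Fin n ⊕ Fin n) (Fin n ⊕ Fin n) k,
      xᵀ * Jsp k n = Jsp k n * x ∧
      (∃ u : Matrix (Fin n ⊕ Fin n) (Fin n ⊕ Fin n) k, IsUnit u ∧
        ∃ d : Fin n ⊕ Fin n → k, u * x * u⁻¹ = Matrix.diagonal d) ∧
      Module.finrank k (spCent k n x) = n :=
  stmt_12_general k n hn
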